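/- arXiv:2107.07420 — 5 statements merged into one kernel-verified Lean document; each statement's English description precedes it below -/
import Mathlib

section
/- Let X be a random variable on the d-simplex with mean μ = E[X]. Let H* be the convex piecewise-linear function whose epigraph is the convex hull of the points (μ, 0) and (ê_k, 1) for all vertices ê_k of the simplex. Then for every convex H : Δ_d → [0,1], the Jensen gap satisfies E[H(X)] − H(E[X]) ≤ E[H*(X)] − H*(E[X]). -/
open MeasureTheory Finset

/-!
The truncated epigraph of `H*` is the convex hull of `(μ, 0)` and the points `(ê_k, 1)`. Since
`0 ≤ H ≤ 1`, these generators lie in the epigraph of the convex function `H - H μ`, hence so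
does their hull: `H x - H μ ≤ H* x` on the simplex. The hull lies at height `≥ 0` and contains
`(μ, 0)`, so `H* μ = 0`, and integrating the pointwise bound gives the claim.
-/

section Pyramid

variable {E ι : Type*} [AddCommGroup E] [Module ℝ E]

def pyramidPoints (c : E) (v : ι → E) : Set (E × ℝ) :=
  {(c, 0)} ∪ {p | ∃ k, p = (v k, 1)}

variable {c : E} {v : ι → E}

theorem convexHull_pyramidPoints_subset_snd_nonneg :
    convexHull ℝ (pyramidPoints c v) ⊆ {p | 0 ≤ p.2} := by
  refine convexHull_min ?_ (convex_halfSpace_ge (LinearMap.snd ℝ E ℝ).isLinear 0)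
  rintro p (rfl | ⟨k, rfl⟩)
  · exact le_refl (0 : ℝ)
  · exact zero_le_one' ℝ

theorem mk_one_mem_convexHull_pyramidPoints {x : E} (hx : x ∈ convexHull ℝ (Set.range v)) :
    (x, (1 : ℝ)) ∈ convexHull ℝ (pyramidPoints c v) := by
  have hconv : Convex ℝ {y : E | (y, (1 : ℝ)) ∈ convexHull ℝ (pyramidPoints c v)} := by
    intro y hy z hz a b ha hb hab
    simpa [Prod.smul_mk, Prod.mk_add_mk, hab] using (convex_convexHull ℝ _) hy hz ha hb hab
  refine convexHull_min ?_ hconv hx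
  rintro _ ⟨k, rfl⟩
  exact subset_convexHull ℝ _ (Or.inr ⟨k, rfl⟩)

theorem convexHull_pyramidPoints_subset_epigraph_sub {K : Set E} {g : E → ℝ}
    (hg : ConvexOn ℝ K g) (hc : c ∈ K) (hv : ∀ k, v k ∈ K) (hgv : ∀ k, g (v k) ≤ g c + 1) :
    convexHull ℝ (pyramidPoints c v) ⊆ {p | p.1 ∈ K ∧ g p.1 - g c ≤ p.2} := by
  refine convexHull_min ?_ (hg.add_const (-g c)).convex_epigraph
  rintro p (rfl | ⟨k, rfl⟩)
  · exact ⟨hc, by simp⟩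
  · exact ⟨hv k, by linarith [hgv k]⟩

def IsPyramidEpigraph (K : Set E) (f : E → ℝ) (c : E) (v : ι → E) : Prop :=
  {p : E × ℝ | p.1 ∈ K ∧ f p.1 ≤ p.2 ∧ p.2 ≤ 1} = convexHull ℝ (pyramidPoints c v)

namespace IsPyramidEpigraph

variable {K : Set E} {f : E → ℝ}

theorem fst_mem (hf : IsPyramidEpigraph K f c v) {p : E × ℝ} (hp : p ∈ pyramidPoints c v) :
    p.1 ∈ K := by
  have : p ∈ {p : E × ℝ | p.1 ∈ K ∧ f p.1 ≤ p.2 ∧ p.2 ≤ 1} := hf ▸ subset_convexHull ℝ _ hp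
  exact this.1

theorem le_one (hf : IsPyramidEpigraph K f c v) (hK : K ⊆ convexHull ℝ (Set.range v)) {x : E}
    (hx : x ∈ K) : f x ≤ 1 := by
  have : (x, (1 : ℝ)) ∈ {p : E × ℝ | p.1 ∈ K ∧ f p.1 ≤ p.2 ∧ p.2 ≤ 1} :=
    hf ▸ mk_one_mem_convexHull_pyramidPoints (hK hx)
  exact this.2.1

theorem apex_eq_zero (hf : IsPyramidEpigraph K f c v) (hK : K ⊆ convexHull ℝ (Set.range v)) :
    f c = 0 := by
  have hc : c ∈ K := hf.fst_mem (Or.inl rfl)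
  have hle : (c, (0 : ℝ)) ∈ {p : E × ℝ | p.1 ∈ K ∧ f p.1 ≤ p.2 ∧ p.2 ≤ 1} :=
    hf ▸ subset_convexHull ℝ _ (Or.inl rfl)
  have hge : (c, f c) ∈ convexHull ℝ (pyramidPoints c v) :=
    hf ▸ ⟨hc, le_rfl, hf.le_one hK hc⟩
  exact le_antisymm hle.2.1 (convexHull_pyramidPoints_subset_snd_nonneg hge)

theorem sub_apex_le (hf : IsPyramidEpigraph K f c v) (hK : K ⊆ convexHull ℝ (Set.range v))
    {g : E → ℝ} (hg : ConvexOn ℝ K g) (hgK : ∀ x ∈ K, g x ∈ Set.Icc (0 : ℝ) 1) {x : E}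
    (hx : x ∈ K) : g x - g c ≤ f x := by
  have hc : c ∈ K := hf.fst_mem (Or.inl rfl)
  have hv : ∀ k, v k ∈ K := fun k => hf.fst_mem (Or.inr ⟨k, rfl⟩)
  have hsub := convexHull_pyramidPoints_subset_epigraph_sub hg hc hv
    fun k => by linarith [(hgK _ (hv k)).2, (hgK c hc).1]
  have hmem : (x, f x) ∈ convexHull ℝ (pyramidPoints c v) :=
    hf ▸ ⟨hx, le_rfl, hf.le_one hK hx⟩
  exact (hsub hmem).2

end IsPyramidEpigraph

end Pyramid

theorem stdSimplex_subset_convexHull_basis (d : ℕ) :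
    stdSimplex ℝ (Fin d) ⊆
      convexHull ℝ (Set.range fun k : Fin d => fun i => if i = k then (1 : ℝ) else 0) := by
  rw [← convexHull_basis_eq_stdSimplex]
  simp_rw [eq_comm]
  rfl

theorem integral_sub_const_le_of_forall {α : Type*} [MeasurableSpace α] {P : Measure α}
    [IsProbabilityMeasure P] {F G : α → ℝ} {a : ℝ} (hF : Integrable F P) (hG : Integrable G P)
    (h : ∀ s, F s - a ≤ G s) : (∫ s, F s ∂P) - a ≤ ∫ s, G s ∂P := by
  have : ∫ s, (F s - a) ∂P ≤ ∫ s, G s ∂P := integral_mono (hF.sub (integrable_const a)) hG h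
  rwa [integral_sub hF (integrable_const a), integral_const, probReal_univ, one_smul] at this

theorem singleton_pyramid_optimal_general {d : ℕ} {α : Type*} [MeasurableSpace α]
    (P : Measure α) [IsProbabilityMeasure P]
    (X : α → Fin d → ℝ) (hX : ∀ s, X s ∈ stdSimplex ℝ (Fin d))
    (μ : Fin d → ℝ)
    (Hstar : (Fin d → ℝ) → ℝ)
    (hepi : {p : (Fin d → ℝ) × ℝ | p.1 ∈ stdSimplex ℝ (Fin d) ∧ Hstar p.1 ≤ p.2 ∧ p.2 ≤ 1}
      = convexHull ℝ ({(μ, 0)} ∪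
          {p : (Fin d → ℝ) × ℝ | ∃ k : Fin d, p = (fun i => if i = k then (1:ℝ) else 0, 1)}))
    (hintHstar : Integrable (fun s => Hstar (X s)) P)
    (H : (Fin d → ℝ) → ℝ) (hconv : ConvexOn ℝ (stdSimplex ℝ (Fin d)) H)
    (hbound : ∀ x ∈ stdSimplex ℝ (Fin d), H x ∈ Set.Icc (0:ℝ) 1)
    (hintH : Integrable (fun s => H (X s)) P) :
    (∫ s, H (X s) ∂P) - H μ ≤ (∫ s, Hstar (X s) ∂P) - Hstar μ := by
  have hpyr : IsPyramidEpigraph _ Hstar μ fun k i => if i = k then (1 : ℝ) else 0 := hepi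
  have hK := stdSimplex_subset_convexHull_basis d
  rw [hpyr.apex_eq_zero hK, sub_zero]
  exact integral_sub_const_le_of_forall hintH hintHstar fun s =>
    hpyr.sub_apex_le hK hconv hbound (hX s)

/-- The upside-down pyramid `H*`, whose epigraph (below height 1) is the
convex hull of (μ,0) and the vertices (ê_k, 1), maximizes the Jensen gap among all
convex functions Δ_d → [0,1]. -/
theorem singleton_pyramid_optimal {d : ℕ} {α : Type*} [MeasurableSpace α]
    (P : Measure α) [IsProbabilityMeasure P]
    (X : α → Fin d → ℝ) (hX : ∀ s, X s ∈ stdSimplex ℝ (Fin d))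
    (μ : Fin d → ℝ) (hμ : ∀ i, μ i = ∫ s, X s i ∂P)
    (hμΔ : μ ∈ stdSimplex ℝ (Fin d))
    (Hstar : (Fin d → ℝ) → ℝ)
    (hHconv : ConvexOn ℝ (stdSimplex ℝ (Fin d)) Hstar)
    (hepi : {p : (Fin d → ℝ) × ℝ | p.1 ∈ stdSimplex ℝ (Fin d) ∧ Hstar p.1 ≤ p.2 ∧ p.2 ≤ 1}
      = convexHull ℝ ({(μ, 0)} ∪
          {p : (Fin d → ℝ) × ℝ | ∃ k : Fin d, p = (fun i => if i = k then (1:ℝ) else 0, 1)}))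
    (hintHstar : Integrable (fun s => Hstar (X s)) P)
    (H : (Fin d → ℝ) → ℝ) (hconv : ConvexOn ℝ (stdSimplex ℝ (Fin d)) H)
    (hbound : ∀ x ∈ stdSimplex ℝ (Fin d), H x ∈ Set.Icc (0:ℝ) 1)
    (hintH : Integrable (fun s => H (X s)) P) :
    (∫ s, H (X s) ∂P) - H μ ≤ (∫ s, Hstar (X s) ∂P) - Hstar μ :=
  singleton_pyramid_optimal_general P X hX μ Hstar hepi hintHstar H hconv hbound hintH
end

section
/- For a binary state space, given a random variable X on [0,1] with mean μ = E[X] ∈ (0,1), the v-shaped function H(x) = −(x−μ)/μ for x < μ and H(x) = (x−μ)/(1−μ) for x ≥ μ maximizes the Jensen gap E[H(X)] − H(μ) among all convex functions H : [0,1] → [0,1]. -/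
open MeasureTheory Set

/-! Convexity along the chord from μ to the endpoint 0 gives, for x < μ and t = (μ - x) / μ,
H x - H μ ≤ t (H 0 - H μ) ≤ t, because H takes values in [0,1]; symmetrically towards 1.
The right-hand sides are exactly H*(x), and H*(μ) = 0, so the Jensen gap of H is dominated
pointwise, before integrating, by that of H*. -/

theorem ConvexOn.sub_le_div_mul_sub {s : Set ℝ} {f : ℝ → ℝ} (hf : ConvexOn ℝ s f)
    {a m x : ℝ} (ha : a ∈ s) (hm : m ∈ s) (ham : a ≠ m) (hx : x ∈ uIcc m a) :
    f x - f m ≤ (x - m) / (a - m) * (f a - f m) := by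
  set t := (x - m) / (a - m)
  have hsub : a - m ≠ 0 := sub_ne_zero.2 ham
  have ht : t ∈ Icc (0 : ℝ) 1 := by
    rcases le_total m a with hma | ham_le
    · rw [uIcc_of_le hma] at hx
      have hpos : 0 < a - m := sub_pos.2 (lt_of_le_of_ne hma ham.symm)
      exact ⟨div_nonneg (by linarith [hx.1]) hpos.le, (div_le_one hpos).2 (by linarith [hx.2])⟩
    · rw [uIcc_of_ge ham_le] at hx
      have hneg : a - m < 0 := sub_neg.2 (lt_of_le_of_ne ham_le ham)
      exact ⟨div_nonneg_of_nonpos (by linarith [hx.2]) hneg.le,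
        (div_le_one_of_neg hneg).2 (by linarith [hx.1])⟩
  have hxt : (1 - t) * m + t * a = x := by
    simp only [t]; field_simp; ring
  have hchord := hf.2 hm ha (sub_nonneg.2 ht.2) ht.1 (by ring)
  simp only [smul_eq_mul, hxt] at hchord
  linarith

theorem ConvexOn.sub_le_vShape {f : ℝ → ℝ} (hf : ConvexOn ℝ (Icc 0 1) f)
    (hmaps : MapsTo f (Icc 0 1) (Icc 0 1)) {μ x : ℝ} (hμ : μ ∈ Ioo (0 : ℝ) 1)
    (hx : x ∈ Icc (0 : ℝ) 1) :
    f x - f μ ≤ if x < μ then -(x - μ) / μ else (x - μ) / (1 - μ) := by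
  have hμI : μ ∈ Icc (0 : ℝ) 1 := Ioo_subset_Icc_self hμ
  have hfμ := (hmaps hμI).1
  split_ifs with hxμ
  · have hx' : x ∈ uIcc μ 0 := by rw [uIcc_of_ge hμ.1.le]; exact ⟨hx.1, hxμ.le⟩
    have key := hf.sub_le_div_mul_sub (left_mem_Icc.2 zero_le_one) hμI hμ.1.ne hx'
    have ht : 0 ≤ (x - μ) / (0 - μ) := div_nonneg_of_nonpos (by linarith) (by linarith [hμ.1])
    have hf0 := (hmaps (left_mem_Icc.2 zero_le_one)).2
    calc f x - f μ ≤ (x - μ) / (0 - μ) * (f 0 - f μ) := key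
      _ ≤ (x - μ) / (0 - μ) * 1 := by gcongr; linarith
      _ = -(x - μ) / μ := by rw [mul_one, zero_sub, div_neg, neg_div]
  · push Not at hxμ
    have hx' : x ∈ uIcc μ 1 := by rw [uIcc_of_le hμ.2.le]; exact ⟨hxμ, hx.2⟩
    have key := hf.sub_le_div_mul_sub (right_mem_Icc.2 zero_le_one) hμI hμ.2.ne' hx'
    have ht : 0 ≤ (x - μ) / (1 - μ) := div_nonneg (by linarith) (by linarith [hμ.2])
    have hf1 := (hmaps (right_mem_Icc.2 zero_le_one)).2
    calc f x - f μ ≤ (x - μ) / (1 - μ) * (f 1 - f μ) := key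
      _ ≤ (x - μ) / (1 - μ) * 1 := by gcongr; linarith
      _ = (x - μ) / (1 - μ) := mul_one _

theorem vshape_optimal_general {α : Type*} [MeasurableSpace α]
    (P : Measure α) [IsProbabilityMeasure P]
    (X : α → ℝ) (hX : ∀ s, X s ∈ Set.Icc (0:ℝ) 1)
    (μ : ℝ) (hμ0 : 0 < μ) (hμ1 : μ < 1)
    (Hstar : ℝ → ℝ)
    (hHstar : ∀ x, Hstar x = if x < μ then -(x - μ)/μ else (x - μ)/(1 - μ))
    (hintHstar : Integrable (fun s => Hstar (X s)) P)
    (H : ℝ → ℝ) (hconv : ConvexOn ℝ (Set.Icc (0:ℝ) 1) H)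
    (hbound : ∀ x ∈ Set.Icc (0:ℝ) 1, H x ∈ Set.Icc (0:ℝ) 1)
    (hintH : Integrable (fun s => H (X s)) P) :
    (∫ s, H (X s) ∂P) - H μ ≤ (∫ s, Hstar (X s) ∂P) - Hstar μ := by
  have hHstarμ : Hstar μ = 0 := by simp [hHstar]
  have hpointwise : ∀ s, H (X s) - H μ ≤ Hstar (X s) := fun s => by
    rw [hHstar]; exact hconv.sub_le_vShape hbound ⟨hμ0, hμ1⟩ (hX s)
  calc (∫ s, H (X s) ∂P) - H μ = ∫ s, (H (X s) - H μ) ∂P := by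
        rw [integral_sub hintH (integrable_const _), integral_const, probReal_univ, one_smul]
    _ ≤ ∫ s, Hstar (X s) ∂P := integral_mono (hintH.sub (integrable_const _)) hintHstar hpointwise
    _ = (∫ s, Hstar (X s) ∂P) - Hstar μ := by rw [hHstarμ, sub_zero]

/-- For binary state space, the v-shaped function with kink at the mean μ
maximizes the Jensen gap among all convex functions [0,1] → [0,1]. -/
theorem vshape_optimal {α : Type*} [MeasurableSpace α]
    (P : Measure α) [IsProbabilityMeasure P]
    (X : α → ℝ) (hX : ∀ s, X s ∈ Set.Icc (0:ℝ) 1)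
    (μ : ℝ) (hμ : μ = ∫ s, X s ∂P) (hμ0 : 0 < μ) (hμ1 : μ < 1)
    (Hstar : ℝ → ℝ)
    (hHstar : ∀ x, Hstar x = if x < μ then -(x - μ)/μ else (x - μ)/(1 - μ))
    (hintHstar : Integrable (fun s => Hstar (X s)) P)
    (H : ℝ → ℝ) (hconv : ConvexOn ℝ (Set.Icc (0:ℝ) 1) H)
    (hbound : ∀ x ∈ Set.Icc (0:ℝ) 1, H x ∈ Set.Icc (0:ℝ) 1)
    (hintH : Integrable (fun s => H (X s)) P) :
    (∫ s, H (X s) ∂P) - H μ ≤ (∫ s, Hstar (X s) ∂P) - Hstar μ :=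
  vshape_optimal_general P X hX μ hμ0 hμ1 Hstar hHstar hintHstar H hconv hbound hintH
end

section
/- Let H : Δ_d → [0,1] be smooth on relint(Δ_d). If H is (2d/(d−1))-strongly convex on relint(Δ_d), then H(x) = (d/(d−1))‖x − c‖² for all x ∈ Δ_d, where c = (1/d, …, 1/d). That is, the quadratic scoring rule is the unique bounded convex function achieving strong convexity parameter 2d/(d−1). -/
set_option maxHeartbeats 1000000


open Finset

/-- A bounded convex function on the simplex that is smooth on the relative
interior and (2d/(d−1))-strongly convex there must be the quadratic scoring rule
Q(x) = (d/(d−1))‖x−c‖². -/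
theorem quadratic_unique_max_strong_convexity {d : ℕ} (hd : 2 ≤ d)
    (c : EuclideanSpace ℝ (Fin d)) (hc : ∀ i, c i = (d : ℝ)⁻¹)
    (H : EuclideanSpace ℝ (Fin d) → ℝ)
    (hcont : ContinuousOn H {x : EuclideanSpace ℝ (Fin d) | (∀ i, 0 ≤ x i) ∧ ∑ i, x i = 1})
    (hbound : ∀ x ∈ {x : EuclideanSpace ℝ (Fin d) | (∀ i, 0 ≤ x i) ∧ ∑ i, x i = 1},
      H x ∈ Set.Icc (0:ℝ) 1)
    (U : Set (EuclideanSpace ℝ (Fin d))) (hU : IsOpen U)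
    (hrelint : {x : EuclideanSpace ℝ (Fin d) | (∀ i, 0 < x i) ∧ ∑ i, x i = 1} ⊆ U)
    (hsmooth : ContDiffOn ℝ (⊤ : ℕ∞) H U)
    (hstrong : ∀ x ∈ {x : EuclideanSpace ℝ (Fin d) | (∀ i, 0 < x i) ∧ ∑ i, x i = 1},
      ∀ y ∈ {x : EuclideanSpace ℝ (Fin d) | (∀ i, 0 < x i) ∧ ∑ i, x i = 1},
        H x + fderiv ℝ H x (y - x) + (((2:ℝ)*d/((d:ℝ) - 1))/2) * ‖y - x‖^2 ≤ H y) :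
    ∀ x ∈ {x : EuclideanSpace ℝ (Fin d) | (∀ i, 0 ≤ x i) ∧ ∑ i, x i = 1},
      H x = ((d : ℝ)/((d : ℝ) - 1)) * ‖x - c‖^2 := by
  classical
  have hd2 : (2:ℝ) ≤ (d:ℝ) := by exact_mod_cast hd
  have hdpos : (0:ℝ) < (d:ℝ) := by linarith
  have hd1pos : (0:ℝ) < (d:ℝ) - 1 := by linarith
  set k : ℝ := (d:ℝ)/((d:ℝ)-1) with hk
  have hcoef : ((2:ℝ)*(d:ℝ)/((d:ℝ) - 1))/2 = k := by rw [hk]; ring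
  set T : Set (EuclideanSpace ℝ (Fin d)) :=
    {x : EuclideanSpace ℝ (Fin d) | (∀ i, 0 < x i) ∧ ∑ i, x i = 1} with hTdef
  set S : Set (EuclideanSpace ℝ (Fin d)) :=
    {x : EuclideanSpace ℝ (Fin d) | (∀ i, 0 ≤ x i) ∧ ∑ i, x i = 1} with hSdef
  have hTS : T ⊆ S := fun x hx => ⟨fun i => le_of_lt (hx.1 i), hx.2⟩
  set e : Fin d → EuclideanSpace ℝ (Fin d) := fun i => EuclideanSpace.single i 1 with he
  have he_apply : ∀ i j, e i j = if j = i then (1:ℝ) else 0 := by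
    intro i j; simp [he, EuclideanSpace.single_apply]
  have hcT : c ∈ T := by
    constructor
    · intro i; rw [hc i]; positivity
    · simp [hc]; field_simp
  have hcS : c ∈ S := hTS hcT
  -- inner product facts
  have hinner_e : ∀ (i : Fin d) (v : EuclideanSpace ℝ (Fin d)),
      inner ℝ (e i) v = v i := by
    intro i v
    simp [he, EuclideanSpace.inner_single_left]
  have hinner_c : ∀ v : EuclideanSpace ℝ (Fin d),
      (inner ℝ v c : ℝ) = (∑ i, v i) / d := by
    intro v
    rw [PiLp.inner_apply]
    simp only [RCLike.inner_apply, starRingEnd_apply, star_trivial]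
    rw [Finset.sum_div]
    refine Finset.sum_congr rfl fun i _ => ?_
    rw [hc i]; ring
  have hnorm_sq : ∀ v : EuclideanSpace ℝ (Fin d), ‖v‖^2 = ∑ i, (v i)^2 := by
    intro v
    rw [← real_inner_self_eq_norm_sq, PiLp.inner_apply]
    simp [RCLike.inner_apply, sq]
  have hnorm_e : ∀ i : Fin d, ‖e i‖^2 = 1 := by
    intro i; rw [he]; rw [EuclideanSpace.norm_single]; norm_num
  have hnorm_c : ‖c‖^2 = 1/d := by
    rw [← real_inner_self_eq_norm_sq, hinner_c, hcT.2]
  -- norm of e i - x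
  have hnorm_ex : ∀ (i : Fin d) (x : EuclideanSpace ℝ (Fin d)),
      ‖e i - x‖^2 = 1 - 2 * x i + ‖x‖^2 := by
    intro i x
    rw [norm_sub_sq_real, hnorm_e, hinner_e]
  have hnorm_xc : ∀ x ∈ S, ‖x - c‖^2 = ‖x‖^2 - 1/d := by
    intro x hx
    rw [norm_sub_sq_real, hinner_c, hx.2, hnorm_c]
    ring
  -- key limit lemma
  have key : ∀ x ∈ T, ∀ i : Fin d,
      H x + fderiv ℝ H x (e i - x) + k * ‖e i - x‖^2 ≤ 1 := by
    intro x hx i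
    set y : ℕ → EuclideanSpace ℝ (Fin d) :=
      fun n => e i + ((1:ℝ)/(n+1)) • (c - e i) with hy
    have ht : ∀ n : ℕ, 0 < (1:ℝ)/(n+1) ∧ (1:ℝ)/(n+1) ≤ 1 := by
      intro n
      constructor
      · positivity
      · rw [div_le_one (by positivity)]; linarith [Nat.cast_nonneg (α := ℝ) n]
    have hyT : ∀ n, y n ∈ T := by
      intro n
      obtain ⟨ht0, ht1⟩ := ht n
      constructor
      · intro j
        have : y n j = e i j + (1/(n+1):ℝ) * (c j - e i j) := by
          simp only [hy, PiLp.add_apply, PiLp.smul_apply, PiLp.sub_apply, smul_eq_mul]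
        rw [this, he_apply, hc]
        have ht0' : 0 < ((n:ℝ)+1)⁻¹ := by rw [← one_div]; exact ht0
        have ht1' : ((n:ℝ)+1)⁻¹ ≤ 1 := by rw [← one_div]; exact ht1
        by_cases hj : j = i
        · simp [hj]
          nlinarith [ht0', ht1', mul_pos ht0' (inv_pos.mpr hdpos)]
        · simp [hj]
          positivity
      · have : ∑ j, y n j = ∑ j, (e i j + (1/(n+1):ℝ) * (c j - e i j)) := by
          refine Finset.sum_congr rfl fun j _ => ?_; simp only [hy, PiLp.add_apply, PiLp.smul_apply, PiLp.sub_apply, smul_eq_mul]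
        rw [this]
        have hesum : ∑ j, e i j = 1 := by
          simp [he_apply]
        rw [Finset.sum_add_distrib, ← Finset.mul_sum, Finset.sum_sub_distrib,
          hesum, hcT.2]
        ring
    have hbd : ∀ n, H x + fderiv ℝ H x (y n - x) + k * ‖y n - x‖^2 ≤ 1 := by
      intro n
      have h1 := hstrong x hx (y n) (hyT n)
      rw [hcoef] at h1
      have h2 := (hbound (y n) (hTS (hyT n))).2
      linarith
    have hylim : Filter.Tendsto y Filter.atTop (nhds (e i)) := by
      have h0 : Filter.Tendsto (fun n : ℕ => (1:ℝ)/(n+1)) Filter.atTop (nhds 0) :=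
        tendsto_one_div_add_atTop_nhds_zero_nat
      have h1 := Filter.Tendsto.const_add (e i) (h0.smul_const (c - e i))
      rw [zero_smul, add_zero] at h1
      rw [hy]
      exact h1
    have hflim : Filter.Tendsto
        (fun n => H x + fderiv ℝ H x (y n - x) + k * ‖y n - x‖^2)
        Filter.atTop (nhds (H x + fderiv ℝ H x (e i - x) + k * ‖e i - x‖^2)) := by
      have hcont' : Continuous (fun v : EuclideanSpace ℝ (Fin d) =>
          H x + fderiv ℝ H x (v - x) + k * ‖v - x‖^2) := by
        refine Continuous.add (Continuous.add continuous_const ?_) ?_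
        · exact (fderiv ℝ H x).continuous.comp (continuous_id.sub continuous_const)
        · exact continuous_const.mul (((continuous_id.sub continuous_const).norm).pow 2)
      exact (hcont'.tendsto (e i)).comp hylim
    exact le_of_tendsto hflim (Filter.Eventually.of_forall hbd)
  -- decompositions of vectors
  have hsum_smul_e : ∀ x : EuclideanSpace ℝ (Fin d), ∑ i, x i • e i = x := by
    intro x
    refine PiLp.ext fun j => ?_
    have : (∑ i, x i • e i) j = ∑ i, x i * e i j := by
      rw [WithLp.ofLp_sum, Finset.sum_apply]
      refine Finset.sum_congr rfl fun i _ => rfl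
    rw [this]
    simp [he_apply]
  -- Step at c : H c = 0 and derivative kills tangent directions
  have hkey_c : ∀ i : Fin d, H c + fderiv ℝ H c (e i - c) ≤ 0 := by
    intro i
    have h := key c hcT i
    have hn : ‖e i - c‖^2 = 1 - 1/d := by
      rw [norm_sub_sq_real, hnorm_e, hinner_e, hc i, hnorm_c]; ring
    rw [hn] at h
    have : k * (1 - 1/d) = 1 := by rw [hk]; field_simp
    linarith [this ▸ h]
  have hsum_ec : ∑ i, (e i - c) = (0 : EuclideanSpace ℝ (Fin d)) := by
    refine PiLp.ext fun j => ?_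
    have : (∑ i, (e i - c)) j = ∑ i, (e i j - c j) := by
      rw [WithLp.ofLp_sum, Finset.sum_apply]
      refine Finset.sum_congr rfl fun i _ => rfl
    rw [this]
    have : ∑ i, (e i j - c j) = (∑ i, e i j) - ∑ i : Fin d, c j := by
      rw [Finset.sum_sub_distrib]
    rw [this]
    have h1 : ∑ i, e i j = 1 := by simp [he_apply]
    rw [h1, hc j]
    rw [Finset.sum_const, Finset.card_univ, Fintype.card_fin, nsmul_eq_mul]
    rw [mul_inv_cancel₀ (ne_of_gt hdpos)]
    simp
  have hsum_terms : ∑ i, (H c + fderiv ℝ H c (e i - c)) = d * H c := by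
    rw [Finset.sum_add_distrib, ← map_sum, hsum_ec]
    simp [mul_comm]
  have hHc0 : H c = 0 := by
    have hge : 0 ≤ H c := (hbound c hcS).1
    have hle : (d:ℝ) * H c ≤ 0 := by
      rw [← hsum_terms]
      exact Finset.sum_nonpos fun i _ => hkey_c i
    nlinarith
  have hLc0 : ∀ i : Fin d, fderiv ℝ H c (e i - c) = 0 := by
    have hzero : ∑ i, (H c + fderiv ℝ H c (e i - c)) = 0 := by
      rw [hsum_terms, hHc0]; ring
    intro i
    have := (Finset.sum_eq_zero_iff_of_nonpos (fun j _ => hkey_c j)).1 hzero i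
      (Finset.mem_univ i)
    rw [hHc0] at this
    linarith [this]
  -- lower bound on T
  have hlow : ∀ x ∈ T, k * ‖x - c‖^2 ≤ H x := by
    intro x hx
    have h := hstrong c hcT x hx
    rw [hcoef, hHc0] at h
    have hdecomp : x - c = ∑ i, x i • (e i - c) := by
      have : ∑ i, x i • (e i - c) = (∑ i, x i • e i) - (∑ i, x i) • c := by
        rw [Finset.sum_smul]
        rw [← Finset.sum_sub_distrib]
        refine Finset.sum_congr rfl fun i _ => ?_
        rw [smul_sub]
      rw [this, hsum_smul_e, hx.2, one_smul]
    have hL : fderiv ℝ H c (x - c) = 0 := by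
      rw [hdecomp, map_sum]
      refine Finset.sum_eq_zero fun i _ => ?_
      rw [map_smul, hLc0 i, smul_zero]
    rw [hL] at h
    linarith
  -- upper bound on T
  have hup : ∀ x ∈ T, H x ≤ k * ‖x - c‖^2 := by
    intro x hx
    have hterm : ∀ i : Fin d,
        x i * H x ≤ x i * (1 - fderiv ℝ H x (e i - x) - k * ‖e i - x‖^2) := by
      intro i
      have := key x hx i
      exact mul_le_mul_of_nonneg_left (by linarith) (le_of_lt (hx.1 i))
    have hsum : ∑ i, x i * H x
        ≤ ∑ i, x i * (1 - fderiv ℝ H x (e i - x) - k * ‖e i - x‖^2) :=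
      Finset.sum_le_sum fun i _ => hterm i
    have hleft : ∑ i, x i * H x = H x := by
      rw [← Finset.sum_mul, hx.2, one_mul]
    have hL0 : ∑ i, x i * fderiv ℝ H x (e i - x) = 0 := by
      have : ∑ i, x i * fderiv ℝ H x (e i - x)
          = fderiv ℝ H x (∑ i, x i • (e i - x)) := by
        rw [map_sum]
        refine Finset.sum_congr rfl fun i _ => ?_
        rw [map_smul]; rfl
      rw [this]
      have : ∑ i, x i • (e i - x) = (0 : EuclideanSpace ℝ (Fin d)) := by
        have h1 : ∑ i, x i • (e i - x) = (∑ i, x i • e i) - (∑ i, x i) • x := by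
          rw [Finset.sum_smul, ← Finset.sum_sub_distrib]
          refine Finset.sum_congr rfl fun i _ => ?_
          rw [smul_sub]
        rw [h1, hsum_smul_e, hx.2, one_smul, sub_self]
      rw [this, map_zero]
    have hnormsum : ∑ i, x i * ‖e i - x‖^2 = 1 - ‖x‖^2 := by
      have h1 : ∀ i : Fin d, x i * ‖e i - x‖^2 = x i - 2 * (x i)^2 + x i * ‖x‖^2 := by
        intro i; rw [hnorm_ex]; ring
      rw [Finset.sum_congr rfl fun i _ => h1 i]
      have h2 : ∑ i, 2 * (x i)^2 = 2 * ‖x‖^2 := by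
        rw [hnorm_sq, Finset.mul_sum]
      rw [Finset.sum_add_distrib, Finset.sum_sub_distrib, hx.2, ← Finset.sum_mul,
        hx.2, one_mul, h2]
      ring
    have hright : ∑ i, x i * (1 - fderiv ℝ H x (e i - x) - k * ‖e i - x‖^2)
        = 1 - k * (1 - ‖x‖^2) := by
      have : ∀ i : Fin d, x i * (1 - fderiv ℝ H x (e i - x) - k * ‖e i - x‖^2)
          = x i - x i * fderiv ℝ H x (e i - x) - k * (x i * ‖e i - x‖^2) := by
        intro i; ring
      rw [Finset.sum_congr rfl fun i _ => this i]
      rw [Finset.sum_sub_distrib, Finset.sum_sub_distrib, hx.2, hL0, ← Finset.mul_sum,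
        hnormsum]
      ring
    rw [hleft, hright] at hsum
    have hxc := hnorm_xc x (hTS hx)
    rw [hxc]
    have hkd : k * (1/d) = 1/((d:ℝ)-1) := by rw [hk]; field_simp
    have hk1 : (1:ℝ) - k = -(1/((d:ℝ)-1)) := by rw [hk]; field_simp; ring
    nlinarith [hsum]
  have heq : ∀ x ∈ T, H x = k * ‖x - c‖^2 := fun x hx =>
    le_antisymm (hup x hx) (hlow x hx)
  -- extend by continuity to S
  intro x hx
  set z : ℕ → EuclideanSpace ℝ (Fin d) :=
    fun n => x + ((1:ℝ)/(n+1)) • (c - x) with hz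
  have ht : ∀ n : ℕ, 0 < (1:ℝ)/(n+1) ∧ (1:ℝ)/(n+1) ≤ 1 := by
    intro n
    constructor
    · positivity
    · rw [div_le_one (by positivity)]; linarith [Nat.cast_nonneg (α := ℝ) n]
  have hzT : ∀ n, z n ∈ T := by
    intro n
    obtain ⟨ht0, ht1⟩ := ht n
    constructor
    · intro j
      have hzj : z n j = x j + (1/(n+1):ℝ) * (c j - x j) := by simp only [hz, PiLp.add_apply, PiLp.smul_apply, PiLp.sub_apply, smul_eq_mul]
      rw [hzj, hc]
      have hxj := hx.1 j
      nlinarith [inv_pos.mpr hdpos]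
    · have : ∑ j, z n j = ∑ j, (x j + (1/(n+1):ℝ) * (c j - x j)) := by
        refine Finset.sum_congr rfl fun j _ => ?_; simp only [hz, PiLp.add_apply, PiLp.smul_apply, PiLp.sub_apply, smul_eq_mul]
      rw [this, Finset.sum_add_distrib, ← Finset.mul_sum, Finset.sum_sub_distrib,
        hx.2, hcT.2]
      ring
  have hzlim : Filter.Tendsto z Filter.atTop (nhds x) := by
    have h0 : Filter.Tendsto (fun n : ℕ => (1:ℝ)/(n+1)) Filter.atTop (nhds 0) :=
      tendsto_one_div_add_atTop_nhds_zero_nat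
    have h1 := Filter.Tendsto.const_add x (h0.smul_const (c - x))
    rw [zero_smul, add_zero] at h1
    rw [hz]
    exact h1
  have hzlimS : Filter.Tendsto z Filter.atTop (nhdsWithin x S) :=
    tendsto_nhdsWithin_of_tendsto_nhds_of_eventually_within z hzlim
      (Filter.Eventually.of_forall fun n => hTS (hzT n))
  have hH1 : Filter.Tendsto (fun n => H (z n)) Filter.atTop (nhds (H x)) :=
    (hcont x hx).tendsto.comp hzlimS
  have hH2 : Filter.Tendsto (fun n => k * ‖z n - c‖^2) Filter.atTop
      (nhds (k * ‖x - c‖^2)) := by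
    have hcont' : Continuous (fun v : EuclideanSpace ℝ (Fin d) => k * ‖v - c‖^2) :=
      continuous_const.mul (((continuous_id.sub continuous_const).norm).pow 2)
    exact (hcont'.tendsto x).comp hzlim
  have hHeq : (fun n => H (z n)) = fun n => k * ‖z n - c‖^2 :=
    funext fun n => heq (z n) (hzT n)
  rw [hHeq] at hH1
  exact tendsto_nhds_unique hH1 hH2
end

section
/- Let H : [0,1] → [0,1] be convex with H(0) ≤ 1, H(1) ≤ 1, and suppose H is twice differentiable on (0,1). Then the infimum over x ∈ (0,1) of x(1−x)H''(x) is at most 1/ln 2. Moreover, equality holds only if H(x) = (x ln x + (1−x) ln(1−x))/ln 2 + 1 for all x ∈ (0,1). -/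
/-!
With `c` a lower bound of `x (1 - x) H''(x)` on `(0,1)`, the function `G = H + c · binEntropy`
has `G'' = H'' - c / (x (1 - x)) ≥ 0`, so it is convex on `(0,1)`. Since `H ≤ 1` and `binEntropy`
vanishes at `0` and `1`, convexity forces `G ≤ 1`; at `x = 1/2` this reads
`H(1/2) + c log 2 ≤ 1`, whence `c ≤ 1 / log 2` because `H(1/2) ≥ 0`. If `c = 1 / log 2`, then
`G(1/2) = 1` is the maximum of the convex function `G`, attained at an interior point, so
`G ≡ 1` on `(0,1)`, i.e. `H = 1 - binEntropy / log 2`, the log scoring rule.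
-/

open Real Set Filter Topology

namespace ConvexOn

variable {f u : ℝ → ℝ} {a b M x : ℝ}

theorem le_of_le_of_tendsto (hf : ConvexOn ℝ (Ioo a b) f) (hfu : ∀ y ∈ Ioo a b, f y ≤ u y)
    (ha : Tendsto u (𝓝[>] a) (𝓝 M)) (hb : Tendsto u (𝓝[<] b) (𝓝 M)) (hx : x ∈ Ioo a b) :
    f x ≤ M := by
  have hsegment : ∀ s ∈ Ioo a x, ∀ t ∈ Ioo x b, f x ≤ max (u s) (u t) := by
    intro s hs t ht
    have hs' : s ∈ Ioo a b := ⟨hs.1, hs.2.trans hx.2⟩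
    have ht' : t ∈ Ioo a b := ⟨hx.1.trans ht.1, ht.2⟩
    exact (hf.le_on_segment hs' ht' (Icc_subset_segment ⟨hs.2.le, ht.1.le⟩)).trans
      (max_le_max (hfu s hs') (hfu t ht'))
  have hleft : ∀ t ∈ Ioo x b, f x ≤ max M (u t) := fun t ht =>
    ge_of_tendsto (ha.max tendsto_const_nhds) <| by
      filter_upwards [Ioo_mem_nhdsGT hx.1] with s hs using hsegment s hs t ht
  have : f x ≤ max M M := ge_of_tendsto (tendsto_const_nhds.max hb) <| by
    filter_upwards [Ioo_mem_nhdsLT hx.2] with t ht using hleft t ht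
  rwa [max_self] at this

theorem eq_of_isMaxOn_Ioo {m : ℝ} (hf : ConvexOn ℝ (Ioo a b) f) (hmax : IsMaxOn f (Ioo a b) m)
    (hm : m ∈ Ioo a b) (hx : x ∈ Ioo a b) : f x = f m := by
  refine le_antisymm (hmax hx) ?_
  rcases lt_or_ge x m with hxm | hmx
  · obtain ⟨z, hmz, hzb⟩ := exists_between hm.2
    have hz : z ∈ Ioo a b := ⟨hm.1.trans hmz, hzb⟩
    exact hf.le_left_of_right_le'' hx hz hxm.le hmz (hmax hz)
  · obtain ⟨z, haz, hzm⟩ := exists_between hm.1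
    have hz : z ∈ Ioo a b := ⟨haz, hzm.trans hm.2⟩
    exact hf.le_right_of_left_le'' hz hx hzm hmx (hmax hz)

end ConvexOn

lemma hasDerivAt_deriv_binEntropy {p : ℝ} (hp₀ : p ≠ 0) (hp₁ : p ≠ 1) :
    HasDerivAt (deriv binEntropy) (-1 / (p * (1 - p))) p := by
  have hdiff : DifferentiableAt ℝ (deriv binEntropy) p := by
    rw [funext deriv_binEntropy]
    exact ((differentiableAt_log (sub_ne_zero.2 hp₁.symm)).comp p
      ((differentiableAt_const 1).sub differentiableAt_id)).sub (differentiableAt_log hp₀)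
  have hsecond : deriv (deriv binEntropy) p = -1 / (p * (1 - p)) := deriv2_binEntropy
  exact hsecond ▸ hdiff.hasDerivAt

section BetaOperator

variable {H : ℝ → ℝ} {c : ℝ}

lemma convexOn_add_mul_binEntropy
    (hd1 : ∀ x ∈ Ioo (0:ℝ) 1, DifferentiableAt ℝ H x)
    (hd2 : ∀ x ∈ Ioo (0:ℝ) 1, DifferentiableAt ℝ (deriv H) x)
    (hc : ∀ x ∈ Ioo (0:ℝ) 1, c ≤ x * (1 - x) * deriv (deriv H) x) :
    ConvexOn ℝ (Ioo 0 1) (fun x => H x + c * binEntropy x) := by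
  have hG : ∀ x ∈ Ioo (0:ℝ) 1,
      HasDerivAt (fun x => H x + c * binEntropy x) (deriv H x + c * deriv binEntropy x) x :=
    fun x hx => (hd1 x hx).hasDerivAt.add
      ((differentiableAt_binEntropy hx.1.ne' hx.2.ne).hasDerivAt.const_mul c)
  have hG' : ∀ x ∈ Ioo (0:ℝ) 1, HasDerivAt (fun x => deriv H x + c * deriv binEntropy x)
      (deriv (deriv H) x + c * (-1 / (x * (1 - x)))) x :=
    fun x hx => (hd2 x hx).hasDerivAt.add
      ((hasDerivAt_deriv_binEntropy hx.1.ne' hx.2.ne).const_mul c)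
  refine convexOn_of_hasDerivWithinAt2_nonneg (convex_Ioo 0 1)
    (f' := fun x => deriv H x + c * deriv binEntropy x)
    (f'' := fun x => deriv (deriv H) x + c * (-1 / (x * (1 - x))))
    (fun x hx => (hG x hx).continuousAt.continuousWithinAt) ?_ ?_ ?_ <;>
    rw [interior_Ioo] <;> intro x hx
  · exact (hG x hx).hasDerivWithinAt
  · exact (hG' x hx).hasDerivWithinAt
  · have hpos : 0 < x * (1 - x) := mul_pos hx.1 (sub_pos.2 hx.2)
    have hdiv : c / (x * (1 - x)) ≤ deriv (deriv H) x := (div_le_iff₀' hpos).2 (hc x hx)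
    rw [mul_div_assoc', mul_neg_one, neg_div]
    linarith

lemma add_mul_binEntropy_le_one (hle : ∀ x ∈ Ioo (0:ℝ) 1, H x ≤ 1)
    (hG : ConvexOn ℝ (Ioo 0 1) (fun x => H x + c * binEntropy x)) {x : ℝ} (hx : x ∈ Ioo 0 1) :
    H x + c * binEntropy x ≤ 1 := by
  have hu : Continuous (fun x => 1 + c * binEntropy x) := by fun_prop
  refine hG.le_of_le_of_tendsto (u := fun x => 1 + c * binEntropy x)
    (fun y hy => by linarith [hle y hy]) ?_ ?_ hx
  · simpa using (hu.tendsto 0).mono_left nhdsWithin_le_nhds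
  · simpa using (hu.tendsto 1).mono_left nhdsWithin_le_nhds

end BetaOperator

theorem log_rule_maximizes_beta_operator_general (H : ℝ → ℝ)
    (hbound : ∀ x ∈ Set.Icc (0:ℝ) 1, H x ∈ Set.Icc (0:ℝ) 1)
    (hd1 : ∀ x ∈ Set.Ioo (0:ℝ) 1, DifferentiableAt ℝ H x)
    (hd2 : ∀ x ∈ Set.Ioo (0:ℝ) 1, DifferentiableAt ℝ (deriv H) x) :
    (⨅ x : Set.Ioo (0:ℝ) 1, (x:ℝ) * (1 - (x:ℝ)) * deriv (deriv H) x) ≤ 1 / Real.log 2 ∧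
    ((⨅ x : Set.Ioo (0:ℝ) 1, (x:ℝ) * (1 - (x:ℝ)) * deriv (deriv H) x) = 1 / Real.log 2 →
      ∀ x ∈ Set.Ioo (0:ℝ) 1,
        H x = (x * Real.log x + (1 - x) * Real.log (1 - x)) / Real.log 2 + 1) := by
  have hlog : 0 < log 2 := log_pos one_lt_two
  by_cases hbdd : BddBelow (range fun x : Ioo (0:ℝ) 1 => (x:ℝ) * (1 - x) * deriv (deriv H) x)
  swap
  · -- the junk value `iInf = 0` of a family unbounded below
    rw [Real.iInf_of_not_bddBelow hbdd]
    exact ⟨by positivity, fun h => absurd h (by positivity)⟩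
  set c := ⨅ x : Ioo (0:ℝ) 1, (x:ℝ) * (1 - x) * deriv (deriv H) x
  have hG : ConvexOn ℝ (Ioo 0 1) (fun x => H x + c * binEntropy x) :=
    convexOn_add_mul_binEntropy hd1 hd2 fun x hx => ciInf_le hbdd ⟨x, hx⟩
  have hGle : ∀ x ∈ Ioo (0:ℝ) 1, H x + c * binEntropy x ≤ 1 :=
    fun x => add_mul_binEntropy_le_one (fun y hy => (hbound y (Ioo_subset_Icc_self hy)).2) hG
  have hhalf_mem : (2⁻¹ : ℝ) ∈ Ioo 0 1 := by norm_num
  have hhalf : H 2⁻¹ + c * log 2 ≤ 1 := by simpa using hGle _ hhalf_mem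
  have hH_nonneg : 0 ≤ H 2⁻¹ := (hbound _ (Ioo_subset_Icc_self hhalf_mem)).1
  refine ⟨by rw [le_div_iff₀ hlog]; linarith, fun hc x hx => ?_⟩
  have hc_log : c * log 2 = 1 := by rw [hc]; field_simp
  have hG_half : H 2⁻¹ + c * binEntropy 2⁻¹ = 1 := by
    rw [binEntropy_two_inv, hc_log, show H 2⁻¹ = 0 by linarith, zero_add]
  have hmax : IsMaxOn (fun x => H x + c * binEntropy x) (Ioo 0 1) 2⁻¹ :=
    fun y hy => (hGle y hy).trans hG_half.ge
  have hGx : H x + c * binEntropy x = 1 := (hG.eq_of_isMaxOn_Ioo hmax hhalf_mem hx).trans hG_half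
  rw [hc, binEntropy, log_inv, log_inv] at hGx
  field_simp at hGx ⊢
  linarith

/-- For a convex H : [0,1] → [0,1], twice differentiable on (0,1), the
infimum of x(1−x)H''(x) over (0,1) is at most 1/ln 2, with equality only for the
binary log scoring rule. -/
theorem log_rule_maximizes_beta_operator (H : ℝ → ℝ)
    (hconv : ConvexOn ℝ (Set.Icc (0:ℝ) 1) H)
    (hbound : ∀ x ∈ Set.Icc (0:ℝ) 1, H x ∈ Set.Icc (0:ℝ) 1)
    (h0 : H 0 ≤ 1) (h1 : H 1 ≤ 1)
    (hd1 : ∀ x ∈ Set.Ioo (0:ℝ) 1, DifferentiableAt ℝ H x)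
    (hd2 : ∀ x ∈ Set.Ioo (0:ℝ) 1, DifferentiableAt ℝ (deriv H) x) :
    (⨅ x : Set.Ioo (0:ℝ) 1, (x:ℝ) * (1 - (x:ℝ)) * deriv (deriv H) x) ≤ 1 / Real.log 2 ∧
    ((⨅ x : Set.Ioo (0:ℝ) 1, (x:ℝ) * (1 - (x:ℝ)) * deriv (deriv H) x) = 1 / Real.log 2 →
      ∀ x ∈ Set.Ioo (0:ℝ) 1,
        H x = (x * Real.log x + (1 - x) * Real.log (1 - x)) / Real.log 2 + 1) :=
  log_rule_maximizes_beta_operator_general H hbound hd1 hd2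
end

section
/- For the quadratic function Q₂(x) = 4(x − 1/2)² on [0,1] and any δ ∈ (0,1], define x_δ = (1 − √(1−δ))/2 and H(x) = Q₂(x) for x ≥ x_δ, H(x) = 1 − (2δ/(1−√(1−δ)))·x for x < x_δ. Then H is convex on [0,1], H ≥ Q₂ everywhere, H(x) > Q₂(x) for 0 < x < x_δ, and for every random variable X on [0,1] with Jensen gap E[Q₂(X)] − Q₂(E[X]) ≥ δ, one has E[H(X)] − H(E[X]) ≥ E[Q₂(X)] − Q₂(E[X]). -/
open MeasureTheory

private lemma convexOn_congr' {s : Set ℝ} {f g : ℝ → ℝ} (h : ConvexOn ℝ s g)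
    (he : ∀ x ∈ s, f x = g x) : ConvexOn ℝ s f :=
  ⟨h.1, fun x hx y hy a b ha hb hab => by
    rw [he x hx, he y hy, he _ (h.1 hx hy ha hb hab)]
    exact h.2 hx hy ha hb hab⟩

/-- The piecewise modification H of the binary quadratic scoring rule
Q₂(x) = 4(x−1/2)² (linear below x_δ) is convex, dominates Q₂ (strictly on (0, x_δ)),
and has at least as large a Jensen gap as Q₂ on every random variable whose Jensen
gap on Q₂ is at least δ. -/
theorem quadratic_not_uniquely_settled {α : Type*} [MeasurableSpace α]
    (P : Measure α) [IsProbabilityMeasure P]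
    (δ : ℝ) (hδ : δ ∈ Set.Ioc (0:ℝ) 1)
    (Q₂ H : ℝ → ℝ)
    (hQ : ∀ x, Q₂ x = 4*(x - 1/2)^2)
    (xδ : ℝ) (hxδ : xδ = (1 - Real.sqrt (1-δ))/2)
    (hH : ∀ x, H x = if x < xδ then 1 - (2*δ/(1 - Real.sqrt (1-δ)))*x else Q₂ x) :
    ConvexOn ℝ (Set.Icc (0:ℝ) 1) H ∧
    (∀ x ∈ Set.Icc (0:ℝ) 1, Q₂ x ≤ H x) ∧
    (∀ x ∈ Set.Ioo (0:ℝ) xδ, Q₂ x < H x) ∧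
    (∀ X : α → ℝ, (∀ s, X s ∈ Set.Icc (0:ℝ) 1) → Measurable X →
      Integrable X P →
      Integrable (fun s => H (X s)) P → Integrable (fun s => Q₂ (X s)) P →
      δ ≤ (∫ s, Q₂ (X s) ∂P) - Q₂ (∫ s, X s ∂P) →
      (∫ s, Q₂ (X s) ∂P) - Q₂ (∫ s, X s ∂P)
        ≤ (∫ s, H (X s) ∂P) - H (∫ s, X s ∂P)) := by
  obtain ⟨hδ0, hδ1⟩ := hδ
  set s := Real.sqrt (1 - δ) with hs
  have hs0 : 0 ≤ s := Real.sqrt_nonneg _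
  have hs2 : s ^ 2 = 1 - δ := Real.sq_sqrt (by linarith)
  have hs1 : s < 1 := by nlinarith
  have h1s : (0:ℝ) < 1 - s := by linarith
  have hcoef : 2 * δ / (1 - s) = 2 * (1 + s) := by
    field_simp
    nlinarith
  have hxδ0 : 0 < xδ := by rw [hxδ]; linarith
  -- H x for x < xδ
  have hHlt : ∀ x, x < xδ → H x = 1 - 2 * (1 + s) * x := by
    intro x hx
    rw [hH, if_pos hx, hcoef]
  have hHge : ∀ x, xδ ≤ x → H x = Q₂ x := by
    intro x hx
    rw [hH, if_neg (not_lt.2 hx)]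
  -- domination
  have hdiff : ∀ x, (1 - 2 * (1 + s) * x) - Q₂ x = 4 * x * (xδ - x) := by
    intro x
    rw [hQ, hxδ]
    ring
  have hdom : ∀ x ∈ Set.Icc (0:ℝ) 1, Q₂ x ≤ H x := by
    intro x hx
    rcases lt_or_ge x xδ with h | h
    · rw [hHlt x h]
      have := hdiff x
      nlinarith [hx.1]
    · rw [hHge x h]
  have hstrict : ∀ x ∈ Set.Ioo (0:ℝ) xδ, Q₂ x < H x := by
    intro x hx
    rw [hHlt x hx.2]
    have := hdiff x
    nlinarith [hx.1, hx.2]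
  -- convexity
  have hL : ConvexOn ℝ (Set.Icc (0:ℝ) 1) (fun x => 1 - 2 * (1 + s) * x) :=
    ⟨convex_Icc 0 1, fun x _ y _ a b _ _ hab => by simp only [smul_eq_mul]; nlinarith⟩
  have hQc : ConvexOn ℝ (Set.Icc (0:ℝ) 1) Q₂ := by
    refine ⟨convex_Icc 0 1, fun x _ y _ a b ha hb hab => ?_⟩
    have hb1 : b = 1 - a := by linarith
    subst hb1
    simp only [smul_eq_mul, hQ]
    nlinarith [mul_nonneg (mul_nonneg ha hb) (sq_nonneg (x - y))]
  have hconv : ConvexOn ℝ (Set.Icc (0:ℝ) 1) H := by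
    refine convexOn_congr' (hL.sup hQc) ?_
    intro x hx
    rcases lt_or_ge x xδ with h | h
    · rw [hHlt x h]
      have := hdiff x
      exact (max_eq_left (by nlinarith [hx.1])).symm
    · rw [hHge x h]
      have := hdiff x
      refine (max_eq_right ?_).symm
      show 1 - 2 * (1 + s) * x ≤ Q₂ x
      nlinarith [mul_nonneg hx.1 (sub_nonneg.2 h)]
  refine ⟨hconv, hdom, hstrict, ?_⟩
  intro X hX _ hXi hHi hQi hgap
  set m := ∫ t, X t ∂P with hm
  have hm0 : 0 ≤ m := integral_nonneg fun t => (hX t).1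
  have hm1 : m ≤ 1 := by
    have := integral_mono hXi (integrable_const 1) (fun t => (hX t).2)
    simpa using this
  -- E[Q₂ X] ≤ 1
  have hQ1 : (∫ t, Q₂ (X t) ∂P) ≤ 1 := by
    have := integral_mono hQi (integrable_const 1) (fun t => by
      rw [hQ]; nlinarith [(hX t).1, (hX t).2])
    simpa using this
  -- m ≥ xδ
  have hmx : xδ ≤ m := by
    have h1 : Q₂ m ≤ 1 - δ := by linarith
    rw [hQ] at h1
    rw [hxδ]
    nlinarith [hs2, sq_nonneg (s - (1 - 2 * m)), sq_nonneg (s + (1 - 2 * m))]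
  have hHm : H m = Q₂ m := hHge m hmx
  have hEH : (∫ t, Q₂ (X t) ∂P) ≤ ∫ t, H (X t) ∂P :=
    integral_mono hQi hHi fun t => hdom _ (hX t)
  rw [hHm]
  linarith
end
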